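/- arXiv:2112.10835 — 4 statements merged into one kernel-verified Lean document; each statement's English description precedes it below -/
import Mathlib

section
/- Set M := 1 + (2π)^{-d/2} e^{2κ} ‖φ‖_{L¹(ℝ^d)} and m := sup_{t ∈ [-1, +∞)} |F(t)| (the supremum over real t ≥ -1). Then for every z ∈ ℂ with Re z ≥ -1, Im z ≤ 0 and z ≠ -1, one has |F(z)| ≤ M · m^{w(z)}, where w(z) = (2/π)(π/2 + arg(z+1)). -/
/-!
On the half-plane `Re z ≥ -1` one has `|z / (2 + z)| ≤ 1` and `|e^{-κz}| e^{κ |Re z|} ≤ e^{2κ}`,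
while the support condition gives `|∫ e^{z⟪x,ξ⟫} φ x dx| ≤ e^{κ |Re z|} ‖φ‖₁`; hence `|F| ≤ M - 1`
there, and `F` is holomorphic for `Re z > -2`. The map `ζ ↦ exp (iπ(ζ - 1)/2)` sends the strip
`0 ≤ Re ζ ≤ 1` into the quarter plane `{Re w ≥ 0, Im w ≤ 0}`, the line `Re ζ = 1` onto the positive
reals, and `1 - (2i/π) log w` back to `w`, with real part `(2/π)(π/2 + arg w)`. Hadamard's three
lines theorem applied to `ζ ↦ F (exp (iπ(ζ - 1)/2) - 1)` therefore bounds `|F z|` by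
`(M - 1)^{1 - w(z)} m^{w(z)} ≤ M m^{w(z)}`.
-/

open Complex Real MeasureTheory
open scoped InnerProductSpace

section Laplace

variable {E : Type*} [NormedAddCommGroup E] [InnerProductSpace ℝ E] {ξ : E} {κ : ℝ} {φ : E → ℂ}

lemma norm_cexp_mul_ofReal_le (z : ℂ) {t κ : ℝ} (ht : |t| ≤ κ) :
    ‖cexp (z * t)‖ ≤ rexp (|z.re| * κ) := by
  rw [norm_exp, re_mul_ofReal]
  apply Real.exp_le_exp.2
  calc z.re * t ≤ |z.re| * |t| := by rw [← abs_mul]; exact le_abs_self _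
    _ ≤ |z.re| * κ := by gcongr

lemma abs_inner_le_of_ne_zero (hξ : ‖ξ‖ ≤ 1)
    (hsupp : ∀ x, x ∉ Metric.closedBall (0 : E) κ → φ x = 0) {x : E} (hx : φ x ≠ 0) :
    |⟪x, ξ⟫_ℝ| ≤ κ := by
  have hxκ : ‖x‖ ≤ κ := by
    by_contra h
    exact hx (hsupp x (by simpa using h))
  calc |⟪x, ξ⟫_ℝ| ≤ ‖x‖ * ‖ξ‖ := abs_real_inner_le_norm x ξ
    _ ≤ κ * 1 := by gcongr; exact (norm_nonneg x).trans hxκ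
    _ = κ := mul_one κ

lemma norm_cexp_mul_inner_mul_le (hξ : ‖ξ‖ ≤ 1)
    (hsupp : ∀ x, x ∉ Metric.closedBall (0 : E) κ → φ x = 0) (z : ℂ) (x : E) :
    ‖cexp (z * ⟪x, ξ⟫_ℝ) * φ x‖ ≤ rexp (|z.re| * κ) * ‖φ x‖ := by
  by_cases hx : φ x = 0
  · simp [hx]
  rw [norm_mul]
  gcongr
  exact norm_cexp_mul_ofReal_le z (abs_inner_le_of_ne_zero hξ hsupp hx)

lemma norm_cexp_mul_inner_mul_inner_mul_le (hξ : ‖ξ‖ ≤ 1)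
    (hsupp : ∀ x, x ∉ Metric.closedBall (0 : E) κ → φ x = 0) (z : ℂ) (x : E) :
    ‖cexp (z * ⟪x, ξ⟫_ℝ) * ⟪x, ξ⟫_ℝ * φ x‖ ≤ rexp (|z.re| * κ) * κ * ‖φ x‖ := by
  by_cases hx : φ x = 0
  · simp [hx]
  have hinner := abs_inner_le_of_ne_zero hξ hsupp hx
  rw [norm_mul, norm_mul, norm_real, Real.norm_eq_abs]
  gcongr
  exact norm_cexp_mul_ofReal_le z hinner

lemma continuous_cexp_mul_inner (z : ℂ) (ξ : E) :
    Continuous fun x : E ↦ cexp (z * ⟪x, ξ⟫_ℝ) := by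
  fun_prop

variable [MeasurableSpace E] {μ : Measure E}

lemma norm_integral_cexp_mul_inner_mul_le (hφ : Integrable φ μ) (hξ : ‖ξ‖ ≤ 1)
    (hsupp : ∀ x, x ∉ Metric.closedBall (0 : E) κ → φ x = 0) (z : ℂ) :
    ‖∫ x, cexp (z * ⟪x, ξ⟫_ℝ) * φ x ∂μ‖ ≤ rexp (|z.re| * κ) * ∫ x, ‖φ x‖ ∂μ := by
  rw [← integral_const_mul]
  exact norm_integral_le_of_norm_le (hφ.norm.const_mul _)
    (.of_forall (norm_cexp_mul_inner_mul_le hξ hsupp z))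

variable [OpensMeasurableSpace E]

lemma integrable_cexp_mul_inner_mul (hφ : Integrable φ μ) (hξ : ‖ξ‖ ≤ 1)
    (hsupp : ∀ x, x ∉ Metric.closedBall (0 : E) κ → φ x = 0) (z : ℂ) :
    Integrable (fun x ↦ cexp (z * ⟪x, ξ⟫_ℝ) * φ x) μ :=
  (hφ.norm.const_mul (rexp (|z.re| * κ))).mono'
    ((continuous_cexp_mul_inner z ξ).aestronglyMeasurable.mul hφ.1)
    (.of_forall (norm_cexp_mul_inner_mul_le hξ hsupp z))

lemma differentiable_integral_cexp_mul_inner_mul (hφ : Integrable φ μ) (hξ : ‖ξ‖ ≤ 1)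
    (hsupp : ∀ x, x ∉ Metric.closedBall (0 : E) κ → φ x = 0) (hκ : 0 ≤ κ) :
    Differentiable ℂ fun z ↦ ∫ x, cexp (z * ⟪x, ξ⟫_ℝ) * φ x ∂μ := by
  intro z₀
  have hre : ∀ z ∈ Metric.ball z₀ 1, |z.re| ≤ |z₀.re| + 1 := fun z hz ↦ by
    have h₁ : |z.re| - |z₀.re| ≤ |(z - z₀).re| := by rw [sub_re]; exact abs_sub_abs_le_abs_sub _ _
    have h₂ : |(z - z₀).re| < 1 := (abs_re_le_norm _).trans_lt (mem_ball_iff_norm.1 hz)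
    linarith
  refine (hasDerivAt_integral_of_dominated_loc_of_deriv_le
    (F' := fun z x ↦ cexp (z * ⟪x, ξ⟫_ℝ) * ⟪x, ξ⟫_ℝ * φ x)
    (bound := fun x ↦ rexp ((|z₀.re| + 1) * κ) * κ * ‖φ x‖) (Metric.ball_mem_nhds z₀ one_pos)
    (.of_forall fun z ↦ (continuous_cexp_mul_inner z ξ).aestronglyMeasurable.mul hφ.1)
    (integrable_cexp_mul_inner_mul hφ hξ hsupp z₀)
    (((continuous_cexp_mul_inner z₀ ξ).mul (by fun_prop)).aestronglyMeasurable.mul hφ.1)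
    (.of_forall fun x z hz ↦ ?_) (hφ.norm.const_mul _)
    (.of_forall fun x z _ ↦ ?_)).2.differentiableAt
  · refine (norm_cexp_mul_inner_mul_inner_mul_le hξ hsupp z x).trans ?_
    gcongr
    exact hre z hz
  · simpa using ((hasDerivAt_mul_const (⟪x, ξ⟫_ℝ : ℂ)).cexp.mul_const (φ x))

end Laplace

section Quadrant

lemma arg_mem_Icc_of_re_nonneg_of_im_nonpos {w : ℂ} (hre : 0 ≤ w.re) (him : w.im ≤ 0) :
    arg w ∈ Set.Icc (-(π / 2)) 0 := by
  refine ⟨neg_pi_div_two_le_arg_iff.2 (.inl hre), ?_⟩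
  rcases him.lt_or_eq with him | him
  · exact (arg_neg_iff.2 him).le
  · exact (arg_eq_zero_iff.2 ⟨hre, him⟩).le

lemma two_div_pi_mul_pi_div_two_add_arg_mem_Icc {w : ℂ} (hre : 0 ≤ w.re) (him : w.im ≤ 0) :
    2 / π * (π / 2 + arg w) ∈ Set.Icc 0 1 := by
  obtain ⟨h₁, h₂⟩ := arg_mem_Icc_of_re_nonneg_of_im_nonpos hre him
  have hπ := pi_pos
  constructor
  · have : 0 ≤ π / 2 + arg w := by linarith
    positivity
  · calc 2 / π * (π / 2 + arg w) ≤ 2 / π * (π / 2 + 0) := by gcongr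
      _ = 1 := by rw [add_zero]; field_simp

noncomputable def stripToQuadrant (ζ : ℂ) : ℂ := cexp (π / 2 * I * (ζ - 1))

noncomputable def quadrantToStrip (w : ℂ) : ℂ := 1 - 2 / π * I * log w

lemma differentiable_stripToQuadrant : Differentiable ℂ stripToQuadrant := by
  unfold stripToQuadrant
  fun_prop

lemma stripToQuadrant_re_nonneg_im_nonpos {ζ : ℂ} (hζ : ζ.re ∈ Set.Icc (0 : ℝ) 1) :
    0 ≤ (stripToQuadrant ζ).re ∧ (stripToQuadrant ζ).im ≤ 0 := by
  have hπ := pi_pos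
  have him : (π / 2 * I * (ζ - 1) : ℂ).im = π / 2 * (ζ.re - 1) := by simp
  rw [stripToQuadrant, exp_re, exp_im, him]
  obtain ⟨h₀, h₁⟩ := hζ
  constructor
  · exact mul_nonneg (exp_nonneg _) (cos_nonneg_of_mem_Icc ⟨by nlinarith, by nlinarith⟩)
  · exact mul_nonpos_of_nonneg_of_nonpos (exp_nonneg _)
      (sin_nonpos_of_nonpos_of_neg_pi_le (by nlinarith) (by nlinarith))

lemma stripToQuadrant_of_re_eq_one {ζ : ℂ} (hζ : ζ.re = 1) :
    stripToQuadrant ζ = (rexp (-(π / 2) * ζ.im) : ℝ) := by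
  have : ζ - 1 = ζ.im * I := by
    apply Complex.ext <;> simp [hζ]
  rw [stripToQuadrant, this, ofReal_exp]
  congr 1
  push_cast
  ring_nf
  rw [I_sq]
  ring

lemma stripToQuadrant_quadrantToStrip {w : ℂ} (hw : w ≠ 0) :
    stripToQuadrant (quadrantToStrip w) = w := by
  have hπ : (π : ℂ) ≠ 0 := ofReal_ne_zero.2 pi_ne_zero
  rw [stripToQuadrant, quadrantToStrip]
  convert exp_log hw using 2
  field_simp
  ring_nf
  rw [I_sq]
  ring

lemma re_quadrantToStrip (w : ℂ) : (quadrantToStrip w).re = 2 / π * (π / 2 + arg w) := by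
  have hπ := pi_pos.ne'
  simp [quadrantToStrip, log_im]
  field_simp

open HadamardThreeLines in
theorem norm_le_rpow_mul_rpow_of_re_nonneg_of_im_nonpos {E : Type*} [NormedAddCommGroup E]
    [NormedSpace ℂ E] {f : ℂ → E} {a b : ℝ}
    (hd : ∀ w : ℂ, 0 ≤ w.re → w.im ≤ 0 → DifferentiableAt ℂ f w)
    (ha : ∀ w : ℂ, 0 ≤ w.re → w.im ≤ 0 → ‖f w‖ ≤ a) (hb : ∀ t : ℝ, 0 < t → ‖f t‖ ≤ b)
    {w : ℂ} (hre : 0 ≤ w.re) (him : w.im ≤ 0) (hw : w ≠ 0) :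
    ‖f w‖ ≤ a ^ (1 - 2 / π * (π / 2 + arg w)) * b ^ (2 / π * (π / 2 + arg w)) := by
  have hg : ∀ ζ ∈ verticalClosedStrip 0 1,
      0 ≤ (stripToQuadrant ζ).re ∧ (stripToQuadrant ζ).im ≤ 0 := fun ζ hζ ↦
    stripToQuadrant_re_nonneg_im_nonpos hζ
  have hfg : DiffContOnCl ℂ (f ∘ stripToQuadrant) (verticalStrip 0 1) := by
    refine DifferentiableOn.diffContOnCl fun ζ hζ ↦ ?_
    rw [verticalStrip, closure_preimage_re, closure_Ioo zero_ne_one] at hζ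
    exact ((hd _ (hg ζ hζ).1 (hg ζ hζ).2).comp ζ
      (differentiable_stripToQuadrant ζ)).differentiableWithinAt
  have hw' : quadrantToStrip w ∈ verticalClosedStrip 0 1 := by
    rw [verticalClosedStrip, Set.mem_preimage, re_quadrantToStrip]
    exact two_div_pi_mul_pi_div_two_add_arg_mem_Icc hre him
  have key := norm_le_interp_of_mem_verticalClosedStrip₀₁' (f ∘ stripToQuadrant) hw' hfg
    ⟨a, Set.forall_mem_image.2 fun ζ hζ ↦ ha _ (hg ζ hζ).1 (hg ζ hζ).2⟩
    (fun ζ hζ ↦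
      have hζ' : ζ ∈ verticalClosedStrip 0 1 := by simp_all [verticalClosedStrip]
      ha _ (hg ζ hζ').1 (hg ζ hζ').2)
    (fun ζ hζ ↦ by
      rw [Function.comp_apply, stripToQuadrant_of_re_eq_one hζ]
      exact hb _ (exp_pos _))
  rwa [Function.comp_apply, stripToQuadrant_quadrantToStrip hw, re_quadrantToStrip] at key

end Quadrant

lemma norm_div_two_add_le_one {w : ℂ} (hw : -1 ≤ w.re) : ‖w / (2 + w)‖ ≤ 1 := by
  rw [norm_div]
  refine div_le_one_of_le₀ ?_ (norm_nonneg _)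
  rw [← sq_le_sq₀ (norm_nonneg _) (norm_nonneg _), Complex.sq_norm, Complex.sq_norm, normSq_apply,
    normSq_apply]
  simp only [add_re, add_im, re_ofNat, im_ofNat, zero_add]
  nlinarith

lemma norm_cexp_neg_mul_mul_rexp_le {κ : ℝ} (hκ : 0 ≤ κ) {w : ℂ} (hw : -1 ≤ w.re) :
    ‖cexp (-(κ : ℂ) * w)‖ * rexp (|w.re| * κ) ≤ rexp (2 * κ) := by
  rw [norm_exp, ← Real.exp_add, exp_le_exp, neg_mul, neg_re, re_ofReal_mul]
  rcases abs_cases w.re with ⟨h, _⟩ | ⟨h, _⟩ <;> nlinarith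

namespace DampedTransform

variable {E : Type*} [NormedAddCommGroup E] [InnerProductSpace ℝ E] [MeasurableSpace E]
  {μ : Measure E} {ξ : E} {κ : ℝ} {φ : E → ℂ} {s : ℕ} {c : ℂ}
  {F : ℂ → ℂ}

lemma norm_le_of_neg_one_le_re
    (hF : ∀ z, F z = (z / (2 + z)) ^ s * cexp (-(κ : ℂ) * z) * c *
      ∫ x, cexp (z * ⟪x, ξ⟫_ℝ) * φ x ∂μ)
    (hφ : Integrable φ μ) (hξ : ‖ξ‖ ≤ 1)
    (hsupp : ∀ x, x ∉ Metric.closedBall (0 : E) κ → φ x = 0) (hκ : 0 ≤ κ)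
    {w : ℂ} (hw : -1 ≤ w.re) :
    ‖F w‖ ≤ ‖c‖ * rexp (2 * κ) * ∫ x, ‖φ x‖ ∂μ := by
  calc ‖F w‖ = ‖w / (2 + w)‖ ^ s * ‖cexp (-(κ : ℂ) * w)‖ * ‖c‖ *
        ‖∫ x, cexp (w * ⟪x, ξ⟫_ℝ) * φ x ∂μ‖ := by
        rw [hF, norm_mul, norm_mul, norm_mul, norm_pow]
    _ ≤ 1 * ‖cexp (-(κ : ℂ) * w)‖ * ‖c‖ * (rexp (|w.re| * κ) * ∫ x, ‖φ x‖ ∂μ) := by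
        gcongr
        · exact pow_le_one₀ (norm_nonneg _) (norm_div_two_add_le_one hw)
        · exact norm_integral_cexp_mul_inner_mul_le hφ hξ hsupp w
    _ = ‖c‖ * (‖cexp (-(κ : ℂ) * w)‖ * rexp (|w.re| * κ)) * ∫ x, ‖φ x‖ ∂μ := by ring
    _ ≤ ‖c‖ * rexp (2 * κ) * ∫ x, ‖φ x‖ ∂μ := by
        gcongr
        exact norm_cexp_neg_mul_mul_rexp_le hκ hw

lemma differentiableAt_of_ne_neg_two [OpensMeasurableSpace E]
    (hF : ∀ z, F z = (z / (2 + z)) ^ s * cexp (-(κ : ℂ) * z) * c *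
      ∫ x, cexp (z * ⟪x, ξ⟫_ℝ) * φ x ∂μ)
    (hφ : Integrable φ μ) (hξ : ‖ξ‖ ≤ 1)
    (hsupp : ∀ x, x ∉ Metric.closedBall (0 : E) κ → φ x = 0) (hκ : 0 ≤ κ)
    {w : ℂ} (hw : w ≠ -2) : DifferentiableAt ℂ F w := by
  have h2w : 2 + w ≠ 0 := fun h ↦ hw (by linear_combination h)
  rw [funext hF]
  exact ((((differentiableAt_id.div (by fun_prop) h2w).pow s).mul (by fun_prop)).mul_const c).mul
    (differentiable_integral_cexp_mul_inner_mul hφ hξ hsupp hκ w)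

end DampedTransform

lemma rpow_le_one_add {B t : ℝ} (hB : 0 ≤ B) (ht₀ : 0 ≤ t) (ht₁ : t ≤ 1) : B ^ t ≤ 1 + B := by
  rcases le_or_gt B 1 with h | h
  · linarith [rpow_le_one hB h ht₀]
  · calc B ^ t ≤ B ^ (1 : ℝ) := rpow_le_rpow_of_exponent_le h.le ht₁
      _ ≤ 1 + B := by rw [rpow_one]; linarith

theorem stmt3_general
    (d : ℕ) (ξ : EuclideanSpace ℝ (Fin d)) (hξ : ‖ξ‖ = 1)
    (κ : ℝ) (hκ : 0 < κ) (s : ℕ)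
    (φ : EuclideanSpace ℝ (Fin d) → ℂ) (hφ : Integrable φ)
    (hsupp : ∀ x, x ∉ Metric.closedBall (0 : EuclideanSpace ℝ (Fin d)) κ → φ x = 0)
    (F : ℂ → ℂ)
    (hF : ∀ z : ℂ, F z = (z / (2 + z)) ^ s * Complex.exp (-(κ : ℂ) * z) *
      (((2 * Real.pi) ^ (-(d : ℝ) / 2) : ℝ) : ℂ) *
      ∫ x, Complex.exp (z * ((inner ℝ x ξ : ℝ) : ℂ)) * φ x)
    (M : ℝ) (hM : M = 1 + (2 * Real.pi) ^ (-(d : ℝ) / 2) * Real.exp (2 * κ) * ∫ x, ‖φ x‖)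
    (m : ℝ) (hm : m = ⨆ t : Set.Ici (-1 : ℝ), ‖F ((t : ℝ) : ℂ)‖) :
    ∀ z : ℂ, -1 ≤ z.re → z.im ≤ 0 → z ≠ -1 →
      ‖F z‖ ≤ M * m ^ ((2 / Real.pi) * (Real.pi / 2 + Complex.arg (z + 1))) := by
  intro z hre him hne
  have hre₁ : 0 ≤ (z + 1).re := by rw [add_re, one_re]; linarith
  have him₁ : (z + 1).im ≤ 0 := by rwa [add_im, one_im, add_zero]
  set B := (2 * π) ^ (-(d : ℝ) / 2) * rexp (2 * κ) * ∫ x, ‖φ x‖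
  have hF_le : ∀ w : ℂ, -1 ≤ w.re → ‖F w‖ ≤ B := fun w hw ↦ by
    simpa [abs_of_pos (rpow_pos_of_pos two_pi_pos _)] using
      DampedTransform.norm_le_of_neg_one_le_re hF hφ hξ.le hsupp hκ.le hw
  have hbdd : BddAbove (Set.range fun t : Set.Ici (-1 : ℝ) ↦ ‖F ((t : ℝ) : ℂ)‖) :=
    ⟨B, Set.forall_mem_range.2 fun t ↦ hF_le _ (by rw [ofReal_re]; exact t.2)⟩
  have hF_le_m : ∀ t : ℝ, -1 ≤ t → ‖F t‖ ≤ m := fun t ht ↦ hm ▸ le_ciSup hbdd ⟨t, ht⟩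
  have key := norm_le_rpow_mul_rpow_of_re_nonneg_of_im_nonpos (f := fun w ↦ F (w - 1))
    (fun w hw _ ↦ (DampedTransform.differentiableAt_of_ne_neg_two hF hφ hξ.le hsupp hκ.le
      (fun h ↦ by have := congrArg re h; norm_num at this; linarith)).comp w (by fun_prop))
    (fun w hw _ ↦ hF_le _ (by rw [sub_re, one_re]; linarith))
    (fun t ht ↦ by simpa using hF_le_m (t - 1) (by linarith))
    hre₁ him₁ (fun h ↦ hne (by linear_combination h))
  rw [add_sub_cancel_right] at key
  obtain ⟨hθ₀, hθ₁⟩ := two_div_pi_mul_pi_div_two_add_arg_mem_Icc hre₁ him₁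
  have hm₀ : 0 ≤ m := (norm_nonneg _).trans (hF_le_m 0 (by norm_num))
  rw [hM]
  exact key.trans (mul_le_mul_of_nonneg_right
    (rpow_le_one_add (by positivity) (by linarith) (by linarith)) (rpow_nonneg hm₀ _))

/-- Two-constants bound: with `M := 1 + (2π)^{-d/2} e^{2κ} ‖φ‖_{L¹}` and
`m := sup_{t ≥ -1} |F(t)|`, one has `|F(z)| ≤ M m^{w(z)}` for every `z` in the
closed quadrant `{Re z ≥ -1, Im z ≤ 0}` other than `-1`, where
`w(z) = (2/π)(π/2 + arg(z+1))`. -/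
theorem stmt3
    (d : ℕ) (hd : 1 ≤ d) (ξ : EuclideanSpace ℝ (Fin d)) (hξ : ‖ξ‖ = 1)
    (κ : ℝ) (hκ : 0 < κ) (s : ℕ)
    (φ : EuclideanSpace ℝ (Fin d) → ℂ) (hφ : Integrable φ)
    (hsupp : ∀ x, x ∉ Metric.closedBall (0 : EuclideanSpace ℝ (Fin d)) κ → φ x = 0)
    (F : ℂ → ℂ)
    (hF : ∀ z : ℂ, F z = (z / (2 + z)) ^ s * Complex.exp (-(κ : ℂ) * z) *
      (((2 * Real.pi) ^ (-(d : ℝ) / 2) : ℝ) : ℂ) *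
      ∫ x, Complex.exp (z * ((inner ℝ x ξ : ℝ) : ℂ)) * φ x)
    (M : ℝ) (hM : M = 1 + (2 * Real.pi) ^ (-(d : ℝ) / 2) * Real.exp (2 * κ) * ∫ x, ‖φ x‖)
    (m : ℝ) (hm : m = ⨆ t : Set.Ici (-1 : ℝ), ‖F ((t : ℝ) : ℂ)‖) :
    ∀ z : ℂ, -1 ≤ z.re → z.im ≤ 0 → z ≠ -1 →
      ‖F z‖ ≤ M * m ^ ((2 / Real.pi) * (Real.pi / 2 + Complex.arg (z + 1))) :=
  stmt3_general d ξ hξ κ hκ s φ hφ hsupp F hF M hM m hm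
end

section
/- Let ε > 0 and set M := 1 + (2π)^{-d/2} e^{2κ} ‖φ‖_{L¹(ℝ^d)}. If |F(t)| ≤ ε for every real t ≥ -1, then for every real t > 0 one has |(2π)^{-d/2} ∫_{ℝ^d} e^{-i t (x·ξ)} φ(x) dx| ≤ M · (4 + t²)^{s/2} · t^{-s} · ε^{(2/π) arctan(1/t)}. -/
/-!
Let `f z = ∫ exp (z ⟪x, ξ⟫) φ x`. Since `|⟪x, ξ⟫| ≤ κ` on the support of `φ`, `f` is entire and
`|exp (-κ z) f z| ≤ e^{2κ} ‖φ‖₁` for `Re z ≥ -1`; also `|z / (2 + z)| ≤ 1` there. Hence `F` is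
holomorphic on the half-plane `Re z > -1`, bounded by `B = (2π)^{-d/2} e^{2κ} ‖φ‖₁` on its closure,
and bounded by `ε` on the ray `[-1, ∞)`. The map `ζ ↦ exp (-iπζ/2) - 1` sends the strip
`0 ≤ Re ζ ≤ 1` into the closed half-plane, its left edge onto the ray, and
`ζ = (2/π) arctan t + i log (1 + t²) / π` to `-it`. Hadamard's three-lines theorem then gives
`|F (-it)| ≤ ε^{(2/π) arctan (1/t)} B^{(2/π) arctan t} ≤ ε^{(2/π) arctan (1/t)} M`, and
`|F (-it)| = (t / √(4 + t²))^s` times the modulus of the Fourier transform at `tξ`.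
-/

open Complex Real MeasureTheory

lemma norm_cexp_mul_ofReal_le_s4 {z : ℂ} {a κ : ℝ} (ha : |a| ≤ κ) :
    ‖cexp (z * a)‖ ≤ Real.exp (‖z‖ * κ) := by
  rw [norm_exp, re_mul_ofReal, Real.exp_le_exp]
  calc z.re * a ≤ |z.re| * |a| := by rw [← abs_mul]; exact le_abs_self _
    _ ≤ ‖z‖ * κ := mul_le_mul (abs_re_le_norm z) ha (abs_nonneg a) (norm_nonneg z)

lemma norm_cexp_mul_sub_le {z : ℂ} {a κ : ℝ} (hz : -1 ≤ z.re) (ha : |a| ≤ κ) :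
    ‖cexp (z * ↑(a - κ))‖ ≤ Real.exp (2 * κ) := by
  rw [norm_exp, re_mul_ofReal, Real.exp_le_exp]
  obtain ⟨ha₁, ha₂⟩ := abs_le.mp ha
  nlinarith

lemma norm_div_two_add_le_one_s4 {z : ℂ} (hz : -1 ≤ z.re) : ‖z / (2 + z)‖ ≤ 1 := by
  rw [norm_div]
  refine div_le_one_of_le₀ ?_ (norm_nonneg _)
  rw [norm_def, norm_def]
  gcongr
  simp only [normSq_apply, add_re, add_im, re_ofNat, im_ofNat, zero_add]
  nlinarith

section ExpTransform

variable {α : Type*} {g : α → ℝ} {φ : α → ℂ} {κ : ℝ}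

lemma norm_cexp_mul_mul_le (hg : ∀ x ∈ Function.support φ, |g x| ≤ κ) (z : ℂ) (x : α) :
    ‖cexp (z * g x) * φ x‖ ≤ Real.exp (‖z‖ * κ) * ‖φ x‖ := by
  by_cases hx : φ x = 0
  · simp [hx]
  · rw [norm_mul]
    gcongr
    exact norm_cexp_mul_ofReal_le_s4 (hg x hx)

variable [MeasurableSpace α] {μ : Measure α}

lemma integrable_cexp_mul_mul (hgm : AEMeasurable g μ) (hφ : Integrable φ μ)
    (hg : ∀ x ∈ Function.support φ, |g x| ≤ κ) (z : ℂ) :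
    Integrable (fun x ↦ cexp (z * g x) * φ x) μ :=
  (hφ.norm.const_mul _).mono' (by fun_prop) (.of_forall (norm_cexp_mul_mul_le hg z))

lemma differentiable_integral_cexp_mul_mul (hgm : AEMeasurable g μ) (hφ : Integrable φ μ)
    (hg : ∀ x ∈ Function.support φ, |g x| ≤ κ) :
    Differentiable ℂ (fun z ↦ ∫ x, cexp (z * g x) * φ x ∂μ) := by
  intro z₀
  have hball : ∀ z ∈ Metric.ball z₀ 1, ‖z‖ ≤ ‖z₀‖ + 1 := fun z hz ↦ by
    have := norm_le_norm_add_norm_sub' z z₀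
    rw [mem_ball_iff_norm] at hz
    linarith
  refine (hasDerivAt_integral_of_dominated_loc_of_deriv_le
    (F' := fun z x ↦ (g x : ℂ) * (cexp (z * g x) * φ x))
    (bound := fun x ↦ κ * (Real.exp ((‖z₀‖ + 1) * κ) * ‖φ x‖))
    (Metric.ball_mem_nhds z₀ one_pos) (.of_forall fun z ↦ by fun_prop)
    (integrable_cexp_mul_mul hgm hφ hg z₀) (by fun_prop) ?_
    ((hφ.norm.const_mul _).const_mul κ) ?_).2.differentiableAt
  · refine .of_forall fun x z hz ↦ ?_
    by_cases hx : φ x = 0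
    · simp [hx]
    · rw [norm_mul, norm_real, norm_eq_abs]
      refine mul_le_mul (hg x hx) ((norm_cexp_mul_mul_le hg z x).trans ?_) (norm_nonneg _)
        ((abs_nonneg _).trans (hg x hx))
      have : 0 ≤ κ := (abs_nonneg _).trans (hg x hx)
      gcongr
      exact hball z hz
  · refine .of_forall fun x z _ ↦ ?_
    simpa [mul_comm, mul_left_comm] using
      (((hasDerivAt_id z).mul_const (g x : ℂ)).cexp).mul_const (φ x)

lemma norm_cexp_neg_mul_mul_integral_le (hφ : Integrable φ μ)
    (hg : ∀ x ∈ Function.support φ, |g x| ≤ κ) {z : ℂ} (hz : -1 ≤ z.re) :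
    ‖cexp (-κ * z) * ∫ x, cexp (z * g x) * φ x ∂μ‖ ≤ Real.exp (2 * κ) * ∫ x, ‖φ x‖ ∂μ := by
  rw [← integral_const_mul, ← integral_const_mul]
  refine norm_integral_le_of_norm_le (hφ.norm.const_mul _) (.of_forall fun x ↦ ?_)
  by_cases hx : φ x = 0
  · simp [hx]
  · rw [← mul_assoc, ← Complex.exp_add, norm_mul,
      show -κ * z + z * g x = z * ↑(g x - κ) by push_cast; ring]
    gcongr
    exact norm_cexp_mul_sub_le hz (hg x hx)

lemma norm_div_two_add_pow_mul_cexp_mul_integral_le (hφ : Integrable φ μ)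
    (hg : ∀ x ∈ Function.support φ, |g x| ≤ κ) (s : ℕ) (c : ℂ) {z : ℂ} (hz : -1 ≤ z.re) :
    ‖(z / (2 + z)) ^ s * cexp (-κ * z) * c * ∫ x, cexp (z * g x) * φ x ∂μ‖ ≤
      ‖c‖ * (Real.exp (2 * κ) * ∫ x, ‖φ x‖ ∂μ) := by
  rw [mul_comm _ c, ← mul_assoc, mul_assoc, norm_mul, norm_mul, norm_pow]
  calc _ ≤ ‖c‖ * 1 ^ s * (Real.exp (2 * κ) * ∫ x, ‖φ x‖ ∂μ) := by
        gcongr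
        · exact norm_div_two_add_le_one_s4 hz
        · exact norm_cexp_neg_mul_mul_integral_le hφ hg hz
    _ = _ := by ring

lemma diffContOnCl_div_two_add_pow_mul_cexp_mul_integral (hgm : AEMeasurable g μ)
    (hφ : Integrable φ μ) (hg : ∀ x ∈ Function.support φ, |g x| ≤ κ) (s : ℕ) (c : ℂ) :
    DiffContOnCl ℂ (fun z ↦ (z / (2 + z)) ^ s * cexp (-κ * z) * c * ∫ x, cexp (z * g x) * φ x ∂μ)
      {z | -1 < z.re} := by
  refine DifferentiableOn.diffContOnCl fun z hz ↦ ?_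
  have hz : -1 ≤ z.re := closure_lt_subset_le continuous_const continuous_re hz
  have h2z : 2 + z ≠ 0 := fun h ↦ by
    have := congrArg re h
    simp only [add_re, re_ofNat, zero_re] at this
    linarith
  have := differentiable_integral_cexp_mul_mul hgm hφ hg z
  exact DifferentiableAt.differentiableWithinAt (by fun_prop (disch := exact h2z))

end ExpTransform

noncomputable def stripToHalfPlane (ζ : ℂ) : ℂ := cexp (-(π / 2) * I * ζ) - 1

lemma stripToHalfPlane_add_one (ζ : ℂ) :
    stripToHalfPlane ζ + 1 =
      Real.exp (π / 2 * ζ.im) * (Real.cos (π / 2 * ζ.re) - Real.sin (π / 2 * ζ.re) * I) := by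
  have h : -(π / 2) * I * ζ = ↑(π / 2 * ζ.im) + ↑(-(π / 2 * ζ.re)) * I := by
    apply Complex.ext <;> simp
  rw [stripToHalfPlane, sub_add_cancel, h, Complex.exp_add, exp_mul_I, ← ofReal_exp, ← ofReal_cos,
    ← ofReal_sin, Real.cos_neg, Real.sin_neg, ofReal_neg, neg_mul, ← sub_eq_add_neg]

lemma re_stripToHalfPlane (ζ : ℂ) :
    (stripToHalfPlane ζ).re = Real.exp (π / 2 * ζ.im) * Real.cos (π / 2 * ζ.re) - 1 := by
  have h := congrArg re (stripToHalfPlane_add_one ζ)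
  simp only [add_re, one_re, re_ofReal_mul, sub_re, ofReal_re, re_ofReal_mul, I_re, mul_zero,
    sub_zero] at h
  linarith

lemma stripToHalfPlane_of_re_eq_zero {ζ : ℂ} (hζ : ζ.re = 0) :
    stripToHalfPlane ζ = ↑(Real.exp (π / 2 * ζ.im) - 1) := by
  rw [← add_sub_cancel_right (stripToHalfPlane ζ) 1, stripToHalfPlane_add_one, hζ]
  simp

lemma neg_one_le_re_stripToHalfPlane {ζ : ℂ} (hζ : ζ.re ∈ Set.Icc (0 : ℝ) 1) :
    -1 ≤ (stripToHalfPlane ζ).re := by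
  rw [re_stripToHalfPlane, le_sub_iff_add_le, neg_add_cancel]
  refine mul_nonneg (Real.exp_pos _).le (Real.cos_nonneg_of_mem_Icc ⟨?_, ?_⟩) <;>
    nlinarith [Real.pi_pos, hζ.1, hζ.2]

lemma neg_one_lt_re_stripToHalfPlane {ζ : ℂ} (hζ : ζ.re ∈ Set.Ioo (0 : ℝ) 1) :
    -1 < (stripToHalfPlane ζ).re := by
  rw [re_stripToHalfPlane, lt_sub_iff_add_lt, neg_add_cancel]
  refine mul_pos (Real.exp_pos _) (Real.cos_pos_of_mem_Ioo ⟨?_, ?_⟩) <;>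
    nlinarith [Real.pi_pos, hζ.1, hζ.2]

lemma stripToHalfPlane_arctan (t : ℝ) :
    stripToHalfPlane (↑(2 / π * Real.arctan t) + ↑(Real.log (1 + t ^ 2) / π) * I) = -I * t := by
  have hπ : π ≠ 0 := Real.pi_ne_zero
  have hsqrt : Real.exp (π / 2 * (Real.log (1 + t ^ 2) / π)) = √(1 + t ^ 2) := by
    rw [Real.sqrt_eq_rpow, Real.rpow_def_of_pos (by positivity)]
    congr 1
    field_simp
  have hangle : π / 2 * (2 / π * Real.arctan t) = Real.arctan t := by field_simp
  have hsqrt_ne : (√(1 + t ^ 2) : ℂ) ≠ 0 := by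
    exact_mod_cast (Real.sqrt_pos.2 (by positivity)).ne'
  rw [← add_sub_cancel_right (stripToHalfPlane _) 1, stripToHalfPlane_add_one]
  simp only [add_re, ofReal_re, mul_re, I_re, ofReal_im, I_im, add_im, mul_im]
  simp only [mul_zero, sub_zero, mul_one, zero_add, add_zero, hsqrt, hangle, Real.cos_arctan,
    Real.sin_arctan]
  push_cast
  field_simp
  ring

lemma two_div_pi_mul_arctan_mem_Icc {t : ℝ} (ht : 0 ≤ t) :
    2 / π * Real.arctan t ∈ Set.Icc (0 : ℝ) 1 := by
  have := Real.arctan_lt_pi_div_two t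
  have := Real.arctan_nonneg.2 ht
  refine ⟨by positivity, ?_⟩
  rw [div_mul_eq_mul_div, div_le_one Real.pi_pos]
  linarith

lemma differentiable_stripToHalfPlane : Differentiable ℂ stripToHalfPlane := by
  unfold stripToHalfPlane
  fun_prop

open HadamardThreeLines in
theorem norm_le_of_diffContOnCl_re_gt_neg_one {E : Type*} [NormedAddCommGroup E]
    [NormedSpace ℂ E] {G : ℂ → E} {ε B : ℝ} (hG : DiffContOnCl ℂ G {z | -1 < z.re})
    (hB : ∀ z : ℂ, -1 ≤ z.re → ‖G z‖ ≤ B) (hε : ∀ t : ℝ, -1 ≤ t → ‖G t‖ ≤ ε)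
    {t : ℝ} (ht : 0 < t) :
    ‖G (-I * t)‖ ≤ ε ^ (2 / π * Real.arctan (1 / t)) * B ^ (2 / π * Real.arctan t) := by
  set ζ : ℂ := ↑(2 / π * Real.arctan t) + ↑(Real.log (1 + t ^ 2) / π) * I
  have hζ_re : ζ.re = 2 / π * Real.arctan t := by
    simp only [ζ, add_re, ofReal_re, re_ofReal_mul, I_re, mul_zero, add_zero]
  have hζ : ζ ∈ verticalClosedStrip 0 1 := by
    rw [verticalClosedStrip, Set.mem_preimage, hζ_re]
    exact two_div_pi_mul_arctan_mem_Icc ht.le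
  have hGw : DiffContOnCl ℂ (G ∘ stripToHalfPlane) (verticalStrip 0 1) :=
    hG.comp differentiable_stripToHalfPlane.diffContOnCl
      fun z hz ↦ neg_one_lt_re_stripToHalfPlane hz
  have hbdd : BddAbove ((norm ∘ G ∘ stripToHalfPlane) '' verticalClosedStrip 0 1) :=
    ⟨B, by
      rintro _ ⟨z, hz, rfl⟩
      exact hB _ (neg_one_le_re_stripToHalfPlane hz)⟩
  have hleft : ∀ z ∈ re ⁻¹' {0}, ‖(G ∘ stripToHalfPlane) z‖ ≤ ε := fun z hz ↦ by
    rw [Function.comp_apply, stripToHalfPlane_of_re_eq_zero hz]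
    exact hε _ (by linarith [Real.exp_pos (π / 2 * z.im)])
  have hright : ∀ z ∈ re ⁻¹' {1}, ‖(G ∘ stripToHalfPlane) z‖ ≤ B := fun z hz ↦
    hB _ (neg_one_le_re_stripToHalfPlane (by simp_all))
  have hexp : 2 / π * Real.arctan (1 / t) = 1 - ζ.re := by
    rw [hζ_re, one_div, Real.arctan_inv_of_pos ht]
    field_simp
  rw [hexp, ← hζ_re, ← stripToHalfPlane_arctan]
  exact norm_le_interp_of_mem_verticalClosedStrip₀₁' _ hζ hGw hbdd hleft hright

lemma abs_inner_le_of_support_subset_closedBall {E F : Type*} [NormedAddCommGroup E]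
    [InnerProductSpace ℝ E] [Zero F] {φ : E → F} {ξ : E} {κ : ℝ} (hξ : ‖ξ‖ = 1)
    (hsupp : ∀ x, x ∉ Metric.closedBall 0 κ → φ x = 0) :
    ∀ x ∈ Function.support φ, |inner ℝ x ξ| ≤ κ := fun x hx ↦
  calc |inner ℝ x ξ| ≤ ‖x‖ * ‖ξ‖ := abs_real_inner_le_norm x ξ
    _ ≤ κ := by
      rw [hξ, mul_one, ← mem_closedBall_zero_iff]
      exact not_not.mp (mt (hsupp x) hx)

lemma rpow_le_one_add_s4 {B a : ℝ} (hB : 0 ≤ B) (ha₀ : 0 ≤ a) (ha₁ : a ≤ 1) : B ^ a ≤ 1 + B := by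
  rcases le_or_gt B 1 with h | h
  · linarith [Real.rpow_le_one hB h ha₀]
  · linarith [(Real.rpow_le_rpow_of_exponent_le h.le ha₁).trans_eq (Real.rpow_one B)]

lemma rpow_mul_rpow_mul_norm_div_two_add_pow (s : ℕ) {t : ℝ} (ht : 0 < t) :
    (4 + t ^ 2) ^ ((s : ℝ) / 2) * t ^ (-(s : ℝ)) * ‖(-I * t / (2 + -I * t)) ^ s‖ = 1 := by
  have hnum : ‖-I * t‖ = t := by simp [abs_of_pos ht]
  have hden : ‖2 + -I * t‖ = √(4 + t ^ 2) := by
    rw [show (2 : ℂ) + -I * t = (2 : ℝ) + (-t : ℝ) * I by push_cast; ring, norm_add_mul_I]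
    norm_num
  have hsqrt : 0 < √(4 + t ^ 2) := Real.sqrt_pos.2 (by positivity)
  rw [norm_pow, norm_div, hnum, hden, Real.rpow_div_two_eq_sqrt _ (by positivity),
    Real.rpow_natCast, Real.rpow_neg ht.le, Real.rpow_natCast, div_pow]
  field_simp

theorem stmt4_general
    (d : ℕ) (ξ : EuclideanSpace ℝ (Fin d)) (hξ : ‖ξ‖ = 1)
    (κ : ℝ) (s : ℕ)
    (φ : EuclideanSpace ℝ (Fin d) → ℂ) (hφ : Integrable φ)
    (hsupp : ∀ x, x ∉ Metric.closedBall (0 : EuclideanSpace ℝ (Fin d)) κ → φ x = 0)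
    (F : ℂ → ℂ)
    (hF : ∀ z : ℂ, F z = (z / (2 + z)) ^ s * Complex.exp (-(κ : ℂ) * z) *
      (((2 * Real.pi) ^ (-(d : ℝ) / 2) : ℝ) : ℂ) *
      ∫ x, Complex.exp (z * ((inner ℝ x ξ : ℝ) : ℂ)) * φ x)
    (M : ℝ) (hM : M = 1 + (2 * Real.pi) ^ (-(d : ℝ) / 2) * Real.exp (2 * κ) * ∫ x, ‖φ x‖)
    (ε : ℝ) (hε : 0 < ε)
    (hFε : ∀ t : ℝ, -1 ≤ t → ‖F ((t : ℝ) : ℂ)‖ ≤ ε) :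
    ∀ t : ℝ, 0 < t →
      ‖(((2 * Real.pi) ^ (-(d : ℝ) / 2) : ℝ) : ℂ) *
          ∫ x, Complex.exp (-Complex.I * (t : ℂ) * ((inner ℝ x ξ : ℝ) : ℂ)) * φ x‖ ≤
        M * (4 + t ^ 2) ^ ((s : ℝ) / 2) * t ^ (-(s : ℝ)) *
          ε ^ ((2 / Real.pi) * Real.arctan (1 / t)) := by
  intro t ht
  set C : ℝ := (2 * π) ^ (-(d : ℝ) / 2)
  have hCn : ‖(C : ℂ)‖ = C := by rw [norm_real, norm_of_nonneg (by positivity)]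
  have hinner := abs_inner_le_of_support_subset_closedBall hξ hsupp
  have hmeas : AEMeasurable (fun x ↦ inner ℝ x ξ) (volume : Measure (EuclideanSpace ℝ (Fin d))) := by
    fun_prop
  have hF_diff : DiffContOnCl ℂ F {z | -1 < z.re} :=
    funext hF ▸ diffContOnCl_div_two_add_pow_mul_cexp_mul_integral hmeas hφ hinner s _
  have hF_bound (z : ℂ) (hz : -1 ≤ z.re) : ‖F z‖ ≤ C * (Real.exp (2 * κ) * ∫ x, ‖φ x‖) := by
    rw [← hCn, hF]; exact norm_div_two_add_pow_mul_cexp_mul_integral_le hφ hinner s _ hz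
  have harctan := two_div_pi_mul_arctan_mem_Icc ht.le
  have hB : (C * (Real.exp (2 * κ) * ∫ x, ‖φ x‖)) ^ (2 / π * Real.arctan t) ≤ M := by
    rw [hM, ← mul_assoc]
    exact rpow_le_one_add_s4 (by positivity) harctan.1 harctan.2
  have hF_t : ‖F (-I * t)‖ = ‖(-I * t / (2 + -I * t)) ^ s‖ *
      ‖(C : ℂ) * ∫ x, cexp (-I * t * (inner ℝ x ξ : ℝ)) * φ x‖ := by
    have : ‖cexp (-κ * (-I * t))‖ = 1 := by simp [norm_exp]
    rw [hF, norm_mul, norm_mul, norm_mul, norm_mul, this, mul_one, mul_assoc]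
  set K := (4 + t ^ 2) ^ ((s : ℝ) / 2) * t ^ (-(s : ℝ))
  calc _ = K * ‖(-I * t / (2 + -I * t)) ^ s‖ *
        ‖(C : ℂ) * ∫ x, cexp (-I * t * (inner ℝ x ξ : ℝ)) * φ x‖ := by
        rw [rpow_mul_rpow_mul_norm_div_two_add_pow s ht, one_mul]
    _ = K * ‖F (-I * t)‖ := by rw [hF_t, mul_assoc]
    _ ≤ K * (ε ^ (2 / π * Real.arctan (1 / t)) * M) := by
        gcongr
        exact (norm_le_of_diffContOnCl_re_gt_neg_one hF_diff hF_bound hFε ht).trans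
          (by gcongr)
    _ = _ := by ring

/-- If `|F(t)| ≤ ε` for all real `t ≥ -1`, then for all `t > 0` the Fourier
transform of `φ` at `t ξ` satisfies
`|(2π)^{-d/2} ∫ e^{-i t (x·ξ)} φ(x) dx| ≤ M (4+t²)^{s/2} t^{-s} ε^{(2/π) arctan(1/t)}`. -/
theorem stmt4
    (d : ℕ) (hd : 1 ≤ d) (ξ : EuclideanSpace ℝ (Fin d)) (hξ : ‖ξ‖ = 1)
    (κ : ℝ) (hκ : 0 < κ) (s : ℕ)
    (φ : EuclideanSpace ℝ (Fin d) → ℂ) (hφ : Integrable φ)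
    (hsupp : ∀ x, x ∉ Metric.closedBall (0 : EuclideanSpace ℝ (Fin d)) κ → φ x = 0)
    (F : ℂ → ℂ)
    (hF : ∀ z : ℂ, F z = (z / (2 + z)) ^ s * Complex.exp (-(κ : ℂ) * z) *
      (((2 * Real.pi) ^ (-(d : ℝ) / 2) : ℝ) : ℂ) *
      ∫ x, Complex.exp (z * ((inner ℝ x ξ : ℝ) : ℂ)) * φ x)
    (M : ℝ) (hM : M = 1 + (2 * Real.pi) ^ (-(d : ℝ) / 2) * Real.exp (2 * κ) * ∫ x, ‖φ x‖)
    (ε : ℝ) (hε : 0 < ε)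
    (hFε : ∀ t : ℝ, -1 ≤ t → ‖F ((t : ℝ) : ℂ)‖ ≤ ε) :
    ∀ t : ℝ, 0 < t →
      ‖(((2 * Real.pi) ^ (-(d : ℝ) / 2) : ℝ) : ℂ) *
          ∫ x, Complex.exp (-Complex.I * (t : ℂ) * ((inner ℝ x ξ : ℝ) : ℂ)) * φ x‖ ≤
        M * (4 + t ^ 2) ^ ((s : ℝ) / 2) * t ^ (-(s : ℝ)) *
          ε ^ ((2 / Real.pi) * Real.arctan (1 / t)) :=
  stmt4_general d ξ hξ κ s φ hφ hsupp F hF M hM ε hε hFε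
end

section
/- Let β₁ > 0 and β₂ ∈ ℝ. For every x ∈ ℝ, the series ∑_{k=0}^∞ x^k · (Γ(β₁ k + β₂))⁻¹ converges absolutely (the family of terms is summable). -/
open Real

/-- Absolute convergence of the Mittag-Leffler series
`∑_{k} x^k / Γ(β₁ k + β₂)` for every real `x` (with the convention
`(Γ m)⁻¹ = 0` when `Γ` vanishes at the nonpositive integer `m`). -/
theorem stmt6 (β₁ β₂ : ℝ) (hβ₁ : 0 < β₁) :
    ∀ x : ℝ, Summable fun k : ℕ => |x ^ k * (Real.Gamma (β₁ * k + β₂))⁻¹| := by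
  intro x
  set a : ℝ := |x| with ha
  have ha0 : 0 ≤ a := abs_nonneg x
  -- choose a natural number B with (B : ℝ) ^ (β₁/2) ≥ 2a+1
  obtain ⟨B, hB1, hB⟩ : ∃ B : ℕ, 1 ≤ B ∧ (2 * a + 1) ≤ (B : ℝ) ^ (β₁ / 2) := by
    obtain ⟨B, hB⟩ := exists_nat_ge ((2 * a + 1) ^ (2 / β₁))
    have h1 : (1 : ℝ) ≤ (2 * a + 1) ^ (2 / β₁) :=
      Real.one_le_rpow (by linarith) (by positivity)
    refine ⟨B, by exact_mod_cast h1.trans hB, ?_⟩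
    calc 2 * a + 1 = ((2 * a + 1) ^ (2 / β₁)) ^ (β₁ / 2) := by
          rw [← Real.rpow_mul (by linarith)]
          rw [div_mul_div_comm]
          rw [show (2 : ℝ) * β₁ / (β₁ * 2) = 1 by field_simp]
          exact (Real.rpow_one _).symm
      _ ≤ (B : ℝ) ^ (β₁ / 2) :=
          Real.rpow_le_rpow (by positivity) hB (by positivity)
  -- the ratio
  set r : ℝ := a / (2 * a + 1) with hr
  have hr0 : 0 ≤ r := by positivity
  have hr1 : r < 1 := by
    rw [hr, div_lt_one (by linarith)]; linarith
  apply summable_of_isBigO_nat (summable_geometric_of_lt_one hr0 hr1)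
  apply Filter.Eventually.isBigO
  -- eventual bound
  have hev : ∀ᶠ k : ℕ in Filter.atTop, 2 * ((B : ℝ) + 2) + 2 * |β₂| ≤ β₁ * k := by
    have : Filter.Tendsto (fun k : ℕ => β₁ * k) Filter.atTop Filter.atTop :=
      (tendsto_natCast_atTop_atTop (R := ℝ)).const_mul_atTop hβ₁
    exact this.eventually_ge_atTop _
  filter_upwards [hev] with k hk
  set y : ℝ := β₁ * k + β₂ with hy
  have hyb : (B : ℝ) + 2 + |β₂| + β₂ ≤ y := by
    have := abs_nonneg β₂
    have h2 : -|β₂| ≤ β₂ := neg_abs_le β₂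
    nlinarith [hk]
  have hy2 : (2 : ℝ) ≤ y := by
    have := abs_nonneg β₂
    have h2 : -|β₂| ≤ β₂ := neg_abs_le β₂
    have : (1 : ℝ) ≤ B := by exact_mod_cast hB1
    nlinarith
  set m : ℕ := ⌊y⌋₊ with hm
  have hmy : (m : ℝ) ≤ y := Nat.floor_le (by linarith)
  have hym : y < m + 1 := Nat.lt_floor_add_one y
  have hm2 : 2 ≤ m := by
    have := Nat.le_floor (α := ℝ) (n := 2) (by exact_mod_cast hy2)
    exact_mod_cast this
  have hmB : B + 2 ≤ m := by
    have h2 : (B : ℝ) + 1 < (m : ℝ) := by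
      nlinarith [neg_abs_le β₂, abs_nonneg β₂]
    have : B + 1 < m := by exact_mod_cast h2
    omega
  -- Γ y ≥ (m-1)!
  have hGmono : Real.Gamma m ≤ Real.Gamma y := by
    rcases eq_or_lt_of_le hmy with h | h
    · rw [h]
    · exact (Real.Gamma_strictMonoOn_Ici (by simpa using (by exact_mod_cast hm2 : (2:ℝ) ≤ (m:ℝ))) (by simpa using hy2) h).le
  have hGfact : Real.Gamma m = ((Nat.factorial (m-1)) : ℝ) := by
    have hm1 : m - 1 + 1 = m := by omega
    rw [← hm1, Nat.cast_add, Nat.cast_one, Real.Gamma_nat_eq_factorial]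
    simp
  -- factorial lower bound
  have hfact : (B : ℝ) ^ (m - 1 - B) ≤ ((Nat.factorial (m-1)) : ℝ) := by
    have h := Nat.factorial_mul_pow_sub_le_factorial (n := B) (m := m - 1) (by omega)
    have h1 : 1 ≤ Nat.factorial B := Nat.one_le_iff_ne_zero.mpr (Nat.factorial_ne_zero B)
    have : B ^ (m - 1 - B) ≤ Nat.factorial (m-1) := le_trans (Nat.le_mul_of_pos_left _ h1) h
    exact_mod_cast this
  -- exponent bound
  have hexp : β₁ * k / 2 ≤ ((m - 1 - B : ℕ) : ℝ) := by
    have hc : ((m - 1 - B : ℕ) : ℝ) = (m : ℝ) - 1 - B := by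
      push_cast [Nat.cast_sub (by omega : B ≤ m - 1), Nat.cast_sub (by omega : 1 ≤ m)]
      ring
    rw [hc]
    have h2 : -|β₂| ≤ β₂ := neg_abs_le β₂
    nlinarith
  -- combine: Γ y ≥ (2a+1)^k
  have hBpow : ((2 * a + 1) : ℝ) ^ k ≤ (B : ℝ) ^ (m - 1 - B) := by
    have hB1' : (1 : ℝ) ≤ (B : ℝ) := by exact_mod_cast hB1
    calc ((2 * a + 1) : ℝ) ^ k ≤ ((B : ℝ) ^ (β₁ / 2)) ^ k :=
          pow_le_pow_left₀ (by linarith) hB (k)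
      _ = (B : ℝ) ^ (β₁ / 2 * k) := by
          rw [← Real.rpow_natCast ((B : ℝ) ^ (β₁ / 2)) k, ← Real.rpow_mul (by positivity)]
      _ ≤ (B : ℝ) ^ (((m - 1 - B : ℕ) : ℝ)) := by
          apply Real.rpow_le_rpow_of_exponent_le hB1'
          calc β₁ / 2 * k = β₁ * k / 2 := by ring
            _ ≤ _ := hexp
      _ = (B : ℝ) ^ (m - 1 - B) := Real.rpow_natCast _ _
  have hG : ((2 * a + 1) : ℝ) ^ k ≤ Real.Gamma y := by
    calc ((2 * a + 1) : ℝ) ^ k ≤ (B : ℝ) ^ (m - 1 - B) := hBpow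
      _ ≤ ((Nat.factorial (m-1)) : ℝ) := hfact
      _ = Real.Gamma m := hGfact.symm
      _ ≤ Real.Gamma y := hGmono
  have hGpos : 0 < Real.Gamma y := lt_of_lt_of_le (by positivity) hG
  -- final bound
  have habs : |x ^ k * (Real.Gamma y)⁻¹| = a ^ k * (Real.Gamma y)⁻¹ := by
    rw [abs_mul, abs_pow, abs_inv, abs_of_pos hGpos]
  rw [Real.norm_eq_abs, abs_abs, habs]
  calc a ^ k * (Real.Gamma y)⁻¹ ≤ a ^ k * (((2 * a + 1) : ℝ) ^ k)⁻¹ := by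
        apply mul_le_mul_of_nonneg_left _ (by positivity)
        exact inv_anti₀ (by positivity) hG
    _ = r ^ k := by rw [hr, div_pow, div_eq_mul_inv]
    _ ≤ r ^ k := le_refl _
end

section
/- Let α ∈ (0,1) and λ₁ > 0, and define E_{α,1}(x) := ∑_{k=0}^∞ x^k · (Γ(α k + 1))⁻¹ for x ∈ ℝ. Then there exists C > 0, depending only on α and λ₁, such that for every sequence (λ_k)_{k∈ℕ} of reals with λ_k ≥ λ₁ for all k, every real sequence (a_k)_{k∈ℕ} with ∑_k λ_k² a_k² < ∞, and every t > 0, one has ∑_{k} λ_k² · E_{α,1}(-λ_k t^α)² · a_k² ≤ C (1 + t^α)^{-2} ∑_{k} λ_k² a_k². -/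
/-!
The estimate reduces to the pointwise bound `|E_{α,1}(-x)| ≤ Γ(1+α) / (Γ(1+α) + x)` for `x ≥ 0`.
Put `u(t) = E_{α,1}(-t^α)` and `v(t) = Γ(1+α) / (Γ(1+α) + t^α)`. Summing
`D^α t^β = Γ(β+1) / Γ(β+1-α) · t^(β-α)` termwise shows that `D^α u = -u` for the Caputo derivative
`D^α`, while `v(t) - v(s) ≥ -(t^α - s^α) / (Γ(1+α) + t^α)` makes `v` a supersolution,
`D^α v ≥ -v`. In Marchaud form `D^α f(t)` is positive at a maximum point `t > 0` of `f` on `[0, t]`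
with `f(0) < f(t)`; this maximum principle, applied to `±u - v` (which is `≤ 0` at `0`), gives
`±u ≤ v`.
-/

open Real MeasureTheory Set Filter Topology

theorem rpow_sub_one_mul_exp_neg_le_Gamma {A s : ℝ} (hA : 0 < A) (hs : 1 ≤ s) :
    A ^ (s - 1) * exp (-A) ≤ Gamma s := by
  have hint : IntegrableOn (fun x : ℝ => exp (-x) * x ^ (s - 1)) (Ioi 0) :=
    GammaIntegral_convergent (by linarith)
  calc A ^ (s - 1) * exp (-A) = ∫ x in Ioi A, A ^ (s - 1) * exp (-x) := by
        rw [integral_const_mul, integral_exp_neg_Ioi]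
    _ ≤ ∫ x in Ioi A, exp (-x) * x ^ (s - 1) := by
        refine setIntegral_mono_on ((integrableOn_exp_neg_Ioi A).const_mul _)
          (hint.mono_set (Ioi_subset_Ioi hA.le)) measurableSet_Ioi fun x hx => ?_
        rw [mul_comm]
        have hx : A ≤ x := le_of_lt hx
        gcongr
    _ ≤ ∫ x in Ioi 0, exp (-x) * x ^ (s - 1) :=
        setIntegral_mono_set hint
          ((ae_restrict_mem measurableSet_Ioi).mono fun x (hx : 0 < x) => by positivity)
          (Ioi_subset_Ioi hA.le).eventuallyLE
    _ = Gamma s := (Gamma_eq_integral (by linarith)).symm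

theorem summable_pow_mul_inv_Gamma {α x : ℝ} (hα : 0 < α) (hx : 0 ≤ x) :
    Summable fun k : ℕ => x ^ k * (Gamma (α * k + 1))⁻¹ := by
  set A := (x + 1) ^ α⁻¹
  have hA : 0 < A := by positivity
  have hAα : A ^ α = x + 1 := rpow_inv_rpow (by linarith) hα.ne'
  refine Summable.of_nonneg_of_le (fun k => by positivity) (fun k => ?_)
    ((summable_geometric_of_lt_one (r := x / (x + 1)) (by positivity)
      ((div_lt_one (by linarith)).2 (by linarith))).mul_left (exp A))
  have hΓ : (x + 1) ^ k * exp (-A) ≤ Gamma (α * k + 1) := by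
    calc (x + 1) ^ k * exp (-A) = A ^ (α * k + 1 - 1) * exp (-A) := by
          rw [add_sub_cancel_right, rpow_mul_natCast hA.le, hAα]
      _ ≤ Gamma (α * k + 1) :=
          rpow_sub_one_mul_exp_neg_le_Gamma hA (le_add_of_nonneg_left (by positivity))
  calc x ^ k * (Gamma (α * k + 1))⁻¹ ≤ x ^ k * ((x + 1) ^ k * exp (-A))⁻¹ := by
        gcongr
    _ = exp A * (x / (x + 1)) ^ k := by
        rw [div_pow, exp_neg]; field_simp

noncomputable def mittagLeffler (α x : ℝ) : ℝ :=
  ∑' k : ℕ, x ^ k * (Gamma (α * k + 1))⁻¹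

section MittagLeffler

variable {α : ℝ}

theorem summable_mittagLeffler (hα : 0 < α) (x : ℝ) :
    Summable fun k : ℕ => x ^ k * (Gamma (α * k + 1))⁻¹ :=
  .of_norm_bounded (summable_pow_mul_inv_Gamma hα (abs_nonneg x)) fun k => by
    rw [norm_mul, norm_pow, norm_inv, norm_of_nonneg (Gamma_pos_of_pos (by positivity)).le]
    rfl

theorem hasSum_mittagLeffler (hα : 0 < α) (x : ℝ) :
    HasSum (fun k : ℕ => x ^ k * (Gamma (α * k + 1))⁻¹) (mittagLeffler α x) :=
  (summable_mittagLeffler hα x).hasSum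

theorem mittagLeffler_zero : mittagLeffler α 0 = 1 := by
  rw [mittagLeffler, tsum_eq_single 0 fun k hk => by simp [zero_pow hk]]
  simp

theorem contDiff_mittagLeffler (hα : 0 < α) {n : WithTop ℕ∞} : ContDiff ℝ n (mittagLeffler α) := by
  set p := FormalMultilinearSeries.ofScalars ℝ fun k : ℕ => (Gamma (α * k + 1))⁻¹
  have hp : p.radius = ⊤ := p.radius_eq_top_of_summable_norm fun r => by
    simpa [p, FormalMultilinearSeries.ofScalars_norm, mul_comm] using
      (summable_mittagLeffler hα (r : ℝ)).norm
  have hsum : p.sum = mittagLeffler α := by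
    ext x
    rw [← FormalMultilinearSeries.ofScalarsSum, FormalMultilinearSeries.ofScalars_sum_eq,
      mittagLeffler]
    simp [mul_comm]
  have := p.hasFPowerSeriesOnBall (hp ▸ ENNReal.zero_lt_top)
  rw [hsum, hp] at this
  exact contDiff_iff_contDiffAt.2 fun x =>
    (this.analyticAt_of_mem (by simp)).contDiffAt

end MittagLeffler

theorem exists_abs_sub_le_mul_sub_of_contDiffAt {f : ℝ → ℝ} {a t : ℝ}
    (hf : ContinuousOn f (Icc a t)) (hft : ContDiffAt ℝ 1 f t) :
    ∃ L, ∀ s ∈ Icc a t, |f t - f s| ≤ L * (t - s) := by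
  obtain ⟨K, U, hU, hK⟩ := hft.exists_lipschitzOnWith
  obtain ⟨δ, hδ, hball⟩ := Metric.mem_nhds_iff.1 hU
  obtain ⟨M, hM⟩ := isCompact_Icc.exists_bound_of_continuousOn hf
  refine ⟨K + 2 * M / δ, fun s hs => ?_⟩
  have hM0 : 0 ≤ M := (norm_nonneg _).trans (hM s hs)
  have hts : 0 ≤ t - s := sub_nonneg.2 hs.2
  rcases lt_or_ge (t - s) δ with hnear | hfar
  · have hs' : s ∈ U := hball <| by
      rwa [Metric.mem_ball, dist_comm, Real.dist_eq, abs_of_nonneg hts]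
    have := hK.dist_le_mul t (hball (Metric.mem_ball_self hδ)) s hs'
    rw [Real.dist_eq, Real.dist_eq, abs_of_nonneg hts] at this
    nlinarith [div_nonneg (mul_nonneg zero_le_two hM0) hδ.le]
  · have h2M : |f t - f s| ≤ 2 * M := by
      have hMt := hM t (right_mem_Icc.2 (hs.1.trans hs.2))
      have hMs := hM s hs
      rw [Real.norm_eq_abs] at hMt hMs
      linarith [abs_sub (f t) (f s)]
    have : 2 * M ≤ 2 * M / δ * (t - s) := by
      rw [div_mul_eq_mul_div, le_div_iff₀ hδ]; nlinarith
    nlinarith [K.2]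

theorem integral_rpow_mul_sub_rpow {a b t : ℝ} (ha : 0 < a) (hb : 0 < b) (ht : 0 < t) :
    ∫ s in Ioo 0 t, s ^ (a - 1) * (t - s) ^ (b - 1) =
      Gamma a * Gamma b / Gamma (a + b) * t ^ (a + b - 1) := by
  have hbeta := Complex.Gamma_mul_Gamma_eq_betaIntegral (s := a) (t := b) (by simpa) (by simpa)
  have hscaled := Complex.betaIntegral_scaled a b ht
  have hcast : ∫ x in (0 : ℝ)..t, ((x ^ (a - 1) * (t - x) ^ (b - 1) : ℝ) : ℂ) =
      ∫ x in (0 : ℝ)..t, (x : ℂ) ^ ((a : ℂ) - 1) * ((t : ℂ) - x) ^ ((b : ℂ) - 1) := by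
    refine intervalIntegral.integral_congr fun x hx => ?_
    rw [uIcc_of_le ht.le] at hx
    push_cast [Complex.ofReal_cpow hx.1, Complex.ofReal_cpow (sub_nonneg.2 hx.2)]
    rfl
  have hΓ : Gamma (a + b) ≠ 0 := (Gamma_pos_of_pos (by linarith)).ne'
  rw [← integral_Ioc_eq_integral_Ioo, ← intervalIntegral.integral_of_le ht.le]
  apply Complex.ofReal_injective
  rw [← intervalIntegral.integral_ofReal, hcast, hscaled]
  rw [← Complex.ofReal_add, Complex.Gamma_ofReal, Complex.Gamma_ofReal,
    Complex.Gamma_ofReal] at hbeta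
  have hΓ' : (Gamma (a + b) : ℂ) ≠ 0 := Complex.ofReal_ne_zero.2 hΓ
  rw [Complex.ofReal_mul, Complex.ofReal_div, Complex.ofReal_mul, hbeta,
    Complex.ofReal_cpow ht.le]
  push_cast
  field_simp

/-- `Γ(1 - α)` times the Caputo derivative of order `α` of `f` at `t`, written in Marchaud form
(integrate the Caputo integral `∫₀ᵗ f'(s) (t - s)^(-α) ds` by parts). -/
noncomputable def marchaud (α : ℝ) (f : ℝ → ℝ) (t : ℝ) : ℝ :=
  t ^ (-α) * (f t - f 0) + α * ∫ s in Ioo 0 t, (f t - f s) * (t - s) ^ (-α - 1)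

section Marchaud

variable {α t : ℝ} {f g : ℝ → ℝ}

theorem marchaud_const_mul (c : ℝ) :
    marchaud α (fun s => c * f s) t = c * marchaud α f t := by
  simp only [marchaud, ← mul_sub, mul_assoc, integral_const_mul]
  ring

theorem marchaud_sub (hf : IntegrableOn (fun s => (f t - f s) * (t - s) ^ (-α - 1)) (Ioo 0 t))
    (hg : IntegrableOn (fun s => (g t - g s) * (t - s) ^ (-α - 1)) (Ioo 0 t)) :
    marchaud α (fun s => f s - g s) t = marchaud α f t - marchaud α g t := by
  have hsub : (fun s => (f t - g t - (f s - g s)) * (t - s) ^ (-α - 1)) =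
      fun s => (f t - f s) * (t - s) ^ (-α - 1) - (g t - g s) * (t - s) ^ (-α - 1) := by
    ext s; ring
  simp only [marchaud, hsub, integral_sub hf hg]
  ring

theorem marchaud_mono (hα : 0 ≤ α) (ht : 0 < t)
    (hf : IntegrableOn (fun s => (f t - f s) * (t - s) ^ (-α - 1)) (Ioo 0 t))
    (hg : IntegrableOn (fun s => (g t - g s) * (t - s) ^ (-α - 1)) (Ioo 0 t))
    (hfg : ∀ s ∈ Ico 0 t, f t - f s ≤ g t - g s) :
    marchaud α f t ≤ marchaud α g t := by
  unfold marchaud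
  gcongr ?_ + α * ?_
  · exact mul_le_mul_of_nonneg_left (hfg 0 (left_mem_Ico.2 ht)) (rpow_nonneg ht.le _)
  refine setIntegral_mono_on hf hg measurableSet_Ioo fun s hs => ?_
  exact mul_le_mul_of_nonneg_right (hfg s ⟨hs.1.le, hs.2⟩) (rpow_nonneg (sub_pos.2 hs.2).le _)

theorem marchaud_pos_of_isMaxOn (hα : 0 ≤ α) (ht : 0 < t) (hmax : IsMaxOn f (Icc 0 t) t)
    (h0 : f 0 < f t) : 0 < marchaud α f t := by
  have hint : 0 ≤ ∫ s in Ioo 0 t, (f t - f s) * (t - s) ^ (-α - 1) :=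
    setIntegral_nonneg measurableSet_Ioo fun s hs =>
      mul_nonneg (sub_nonneg.2 (hmax ⟨hs.1.le, hs.2.le⟩)) (rpow_nonneg (sub_pos.2 hs.2).le _)
  have : 0 < t ^ (-α) * (f t - f 0) := mul_pos (rpow_pos_of_pos ht _) (sub_pos.2 h0)
  unfold marchaud
  positivity

theorem nonpos_of_marchaud_nonpos {T : ℝ} (hα : 0 ≤ α) (hT : 0 ≤ T)
    (hf : ContinuousOn f (Icc 0 T)) (h0 : f 0 ≤ 0)
    (hmarchaud : ∀ t ∈ Ioc 0 T, 0 < f t → marchaud α f t ≤ 0) : f T ≤ 0 := by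
  by_contra! hfT
  obtain ⟨t, ht, hmax⟩ := isCompact_Icc.exists_isMaxOn (nonempty_Icc.2 hT) hf
  have hft : 0 < f t := hfT.trans_le (hmax (right_mem_Icc.2 hT))
  have ht0 : 0 < t := ht.1.lt_of_ne (by rintro rfl; linarith)
  exact (hmarchaud t ⟨ht0, ht.2⟩ hft).not_gt <| marchaud_pos_of_isMaxOn hα ht0
    (hmax.on_subset (Icc_subset_Icc_right ht.2)) (h0.trans_lt hft)

theorem integrableOn_sub_rpow (hα : α < 1) (ht : 0 < t) :
    IntegrableOn (fun s => (t - s) ^ (-α)) (Ioo 0 t) := by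
  have := (intervalIntegral.intervalIntegrable_rpow' (a := 0) (b := t)
    (show -1 < -α by linarith)).comp_sub_left t
  rw [sub_self, sub_zero] at this
  exact (intervalIntegrable_iff_integrableOn_Ioo_of_le ht.le).1 this.symm

theorem integrableOn_marchaud_integrand (hα : α < 1) (ht : 0 < t)
    (hf : ContinuousOn f (Icc 0 t)) (hft : ContDiffAt ℝ 1 f t) :
    IntegrableOn (fun s => (f t - f s) * (t - s) ^ (-α - 1)) (Ioo 0 t) := by
  obtain ⟨L, hL⟩ := exists_abs_sub_le_mul_sub_of_contDiffAt hf hft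
  have hker : ContinuousOn (fun s => (t - s) ^ (-α - 1)) (Ioo 0 t) :=
    (continuousOn_const.sub continuousOn_id).rpow_const fun s hs => .inl (sub_pos.2 hs.2).ne'
  refine ((integrableOn_sub_rpow hα ht).const_mul L).mono'
    (((continuousOn_const.sub (hf.mono Ioo_subset_Icc_self)).mul hker).aestronglyMeasurable
      measurableSet_Ioo) ?_
  filter_upwards [ae_restrict_mem measurableSet_Ioo] with s hs
  have hts : 0 < t - s := sub_pos.2 hs.2
  rw [norm_mul, norm_of_nonneg (rpow_nonneg hts.le _), Real.norm_eq_abs]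
  calc |f t - f s| * (t - s) ^ (-α - 1) ≤ L * (t - s) * (t - s) ^ (-α - 1) :=
        mul_le_mul_of_nonneg_right (hL s (Ioo_subset_Icc_self hs)) (rpow_nonneg hts.le _)
    _ = L * (t - s) ^ (-α) := by
        rw [rpow_sub_one hts.ne']; field_simp

theorem continuousOn_sub_rpow_mul_rpow_sub_rpow {β : ℝ} (hα : α < 1) (hβ : 0 < β) (ht : 0 < t) :
    ContinuousOn (fun s => (t - s) ^ (-α) * (t ^ β - s ^ β)) (Icc 0 t) := by
  intro s hs
  rcases hs.2.lt_or_eq with hst | rfl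
  · exact (((continuousAt_const.sub continuousAt_id).rpow_const (.inl (sub_pos.2 hst).ne')).mul
      (continuousAt_const.sub (continuous_rpow_const hβ.le).continuousAt)).continuousWithinAt
  obtain ⟨L, hL⟩ := exists_abs_sub_le_mul_sub_of_contDiffAt
    (continuous_rpow_const hβ.le).continuousOn (contDiffAt_rpow_const_of_ne (p := β) ht.ne')
  rw [ContinuousWithinAt, sub_self, sub_self, mul_zero]
  refine squeeze_zero_norm' (a := fun r => L * (s - r) ^ (1 - α)) ?_ ?_
  · filter_upwards [self_mem_nhdsWithin] with r hr
    have hsr : 0 ≤ s - r := sub_nonneg.2 hr.2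
    calc ‖(s - r) ^ (-α) * (s ^ β - r ^ β)‖ = (s - r) ^ (-α) * |s ^ β - r ^ β| := by
          rw [Real.norm_eq_abs, abs_mul, abs_of_nonneg (rpow_nonneg hsr _)]
      _ ≤ (s - r) ^ (-α) * (L * (s - r)) :=
          mul_le_mul_of_nonneg_left (hL r hr) (rpow_nonneg hsr _)
      _ = L * (s - r) ^ (1 - α) := by
          rw [show 1 - α = -α + 1 by ring, rpow_add_one' hsr (by linarith)]; ring
  · have hc : Continuous fun r : ℝ => L * (s - r) ^ (1 - α) :=
      ((continuous_const.sub continuous_id).rpow_const fun _ => .inr (by linarith)).const_mul L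
    simpa [zero_rpow (by linarith : 1 - α ≠ 0)] using (hc.tendsto s).mono_left nhdsWithin_le_nhds

theorem marchaud_rpow_eq_integral {β : ℝ} (hα : α < 1) (hβ : 0 < β) (ht : 0 < t)
    (hint : IntegrableOn (fun s => s ^ (β - 1) * (t - s) ^ (-α)) (Ioo 0 t)) :
    marchaud α (fun s => s ^ β) t = β * ∫ s in Ioo 0 t, s ^ (β - 1) * (t - s) ^ (-α) := by
  have hderiv : ∀ s ∈ Ioo 0 t, HasDerivAt (fun s => (t - s) ^ (-α) * (t ^ β - s ^ β))
      (α * ((t ^ β - s ^ β) * (t - s) ^ (-α - 1)) - β * (s ^ (β - 1) * (t - s) ^ (-α))) s := by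
    intro s hs
    have hker : HasDerivAt (fun r => (t - r) ^ (-α)) (-1 * -α * (t - s) ^ (-α - 1)) s :=
      ((hasDerivAt_id s).const_sub t).rpow_const (.inl (sub_pos.2 hs.2).ne')
    have hpow : HasDerivAt (fun r => t ^ β - r ^ β) (-(β * s ^ (β - 1))) s :=
      (hasDerivAt_rpow_const (.inl hs.1.ne')).const_sub _
    exact (hker.mul hpow).congr_deriv (by ring)
  have hg := integrableOn_marchaud_integrand hα ht (continuous_rpow_const hβ.le).continuousOn
    (contDiffAt_rpow_const_of_ne (p := β) ht.ne')
  have hftc := intervalIntegral.integral_eq_sub_of_hasDerivAt_of_le ht.le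
    (continuousOn_sub_rpow_mul_rpow_sub_rpow hα hβ ht) hderiv
    ((intervalIntegrable_iff_integrableOn_Ioo_of_le ht.le).2
      ((hg.const_mul α).sub (hint.const_mul β)))
  rw [intervalIntegral.integral_of_le ht.le, integral_Ioc_eq_integral_Ioo,
    integral_sub (hg.const_mul α) (hint.const_mul β), integral_const_mul, integral_const_mul]
    at hftc
  simp only [sub_self, mul_zero, zero_rpow hβ.ne', sub_zero, zero_sub] at hftc
  rw [marchaud, zero_rpow hβ.ne', sub_zero]
  linear_combination hftc

theorem marchaud_rpow {β : ℝ} (hα : α < 1) (hβ : 0 < β) (ht : 0 < t) :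
    marchaud α (fun s => s ^ β) t =
      Gamma (1 - α) * Gamma (β + 1) / Gamma (β + 1 - α) * t ^ (β - α) := by
  have hbeta := integral_rpow_mul_sub_rpow hβ (by linarith : 0 < 1 - α) ht
  rw [show 1 - α - 1 = -α by ring, show β + (1 - α) - 1 = β - α by ring] at hbeta
  have hint : IntegrableOn (fun s => s ^ (β - 1) * (t - s) ^ (-α)) (Ioo 0 t) := by
    refine Integrable.of_integral_ne_zero ?_
    rw [hbeta]
    have := Gamma_pos_of_pos hβ
    have := Gamma_pos_of_pos (by linarith : 0 < 1 - α)
    have := Gamma_pos_of_pos (by linarith : 0 < β + (1 - α))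
    positivity
  rw [marchaud_rpow_eq_integral hα hβ ht hint, hbeta, Gamma_add_one hβ.ne',
    show β + 1 - α = β + (1 - α) by ring]
  ring

theorem hasSum_marchaud {f : ℕ → ℝ → ℝ} {F G : ℝ → ℝ} (ht : 0 < t)
    (hF : ∀ s ∈ Icc 0 t, HasSum (fun k => f k s) (F s))
    (hf : ∀ k, IntegrableOn (fun s => (f k t - f k s) * (t - s) ^ (-α - 1)) (Ioo 0 t))
    (hG : ∀ s ∈ Ioo 0 t, HasSum (fun k => |f k t - f k s|) (G s))
    (hGint : IntegrableOn (fun s => G s * (t - s) ^ (-α - 1)) (Ioo 0 t)) :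
    HasSum (fun k => marchaud α (f k) t) (marchaud α F t) := by
  have hFt := hF t (right_mem_Icc.2 ht.le)
  have hint : HasSum (fun k => ∫ s in Ioo 0 t, (f k t - f k s) * (t - s) ^ (-α - 1))
      (∫ s in Ioo 0 t, (F t - F s) * (t - s) ^ (-α - 1)) := by
    refine hasSum_integral_of_dominated_convergence
      (fun k s => |f k t - f k s| * (t - s) ^ (-α - 1)) (fun k => (hf k).aestronglyMeasurable)
      (fun k => ae_restrict_of_forall_mem measurableSet_Ioo fun s hs => ?_)
      (ae_restrict_of_forall_mem measurableSet_Ioo fun s hs => ((hG s hs).mul_right _).summable)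
      (hGint.congr_fun (fun s hs => ((hG s hs).mul_right _).tsum_eq.symm) measurableSet_Ioo)
      (ae_restrict_of_forall_mem measurableSet_Ioo fun s hs =>
        (hFt.sub (hF s (Ioo_subset_Icc_self hs))).mul_right _)
    rw [norm_mul, norm_of_nonneg (rpow_nonneg (sub_pos.2 hs.2).le _), Real.norm_eq_abs]
  exact ((hFt.sub (hF 0 (left_mem_Icc.2 ht.le))).mul_left _).add (hint.mul_left α)

end Marchaud

section MittagLeffler

variable {α t : ℝ}

theorem marchaud_mittagLeffler_term (hα0 : 0 < α) (hα1 : α < 1) (ht : 0 < t) (k : ℕ) :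
    marchaud α (fun s => (-1) ^ (k + 1) * (Gamma (α * ↑(k + 1) + 1))⁻¹ * s ^ (α * ↑(k + 1))) t =
      -Gamma (1 - α) * ((-t ^ α) ^ k * (Gamma (α * k + 1))⁻¹) := by
  have hΓ : Gamma (α * ↑(k + 1) + 1) ≠ 0 := (Gamma_pos_of_pos (by positivity)).ne'
  rw [marchaud_const_mul, marchaud_rpow hα1 (by positivity) ht,
    show α * ↑(k + 1) + 1 - α = α * k + 1 by push_cast; ring,
    show α * ↑(k + 1) - α = α * k by push_cast; ring, rpow_mul_natCast ht.le, neg_pow]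
  field_simp
  ring

theorem marchaud_mittagLeffler (hα0 : 0 < α) (hα1 : α < 1) (ht : 0 < t) :
    marchaud α (fun s => mittagLeffler α (-s ^ α)) t =
      -(Gamma (1 - α) * mittagLeffler α (-t ^ α)) := by
  set f : ℕ → ℝ → ℝ := fun k s => (-1) ^ k * (Gamma (α * k + 1))⁻¹ * s ^ (α * k)
  have hpow : ∀ {s : ℝ}, 0 ≤ s → ∀ k : ℕ, s ^ (α * k) = (s ^ α) ^ k := fun hs k =>
    rpow_mul_natCast hs α k
  have hE := contDiff_mittagLeffler (n := 1) hα0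
  have hf : ∀ k, IntegrableOn (fun s => (f k t - f k s) * (t - s) ^ (-α - 1)) (Ioo 0 t) :=
    fun k => integrableOn_marchaud_integrand hα1 ht
      (((continuous_rpow_const (by positivity)).const_mul _).continuousOn)
      (contDiffAt_const.mul (contDiffAt_rpow_const_of_ne ht.ne'))
  have hF : ∀ s ∈ Icc 0 t, HasSum (fun k => f k s) (mittagLeffler α (-s ^ α)) := fun s hs => by
    refine (hasSum_mittagLeffler hα0 (-s ^ α)).congr_fun fun k => ?_
    simp only [f, hpow hs.1, neg_pow (s ^ α)]
    ring
  have hG : ∀ s ∈ Ioo 0 t, HasSum (fun k => |f k t - f k s|)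
      (mittagLeffler α (t ^ α) - mittagLeffler α (s ^ α)) := by
    intro s hs
    refine ((hasSum_mittagLeffler hα0 (t ^ α)).sub (hasSum_mittagLeffler hα0 (s ^ α))).congr_fun
      fun k => ?_
    have hmono : (s ^ α) ^ k ≤ (t ^ α) ^ k :=
      pow_le_pow_left₀ (rpow_nonneg hs.1.le _) (rpow_le_rpow hs.1.le hs.2.le hα0.le) k
    have hΓ : 0 ≤ (Gamma (α * k + 1))⁻¹ := inv_nonneg.2 (Gamma_pos_of_pos (by positivity)).le
    rw [show f k t - f k s = (-1) ^ k * ((Gamma (α * k + 1))⁻¹ * ((t ^ α) ^ k - (s ^ α) ^ k)) by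
        simp only [f, hpow ht.le, hpow hs.1.le]; ring,
      abs_mul, abs_pow, abs_neg, abs_one, one_pow, one_mul,
      abs_of_nonneg (mul_nonneg hΓ (sub_nonneg.2 hmono))]
    ring
  have hGint := integrableOn_marchaud_integrand (f := fun s => mittagLeffler α (s ^ α)) hα1 ht
    (by have := continuous_rpow_const hα0.le; have := hE.continuous; fun_prop)
    (by have := contDiffAt_rpow_const_of_ne (p := α) (n := 1) ht.ne'; fun_prop)
  have hsum := hasSum_marchaud ht hF hf hG hGint
  refine hsum.unique ((hasSum_nat_add_iff' 1).1 ?_)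
  have hf0 : marchaud α (f 0) t = 0 := by simp [f, marchaud]
  rw [Finset.sum_range_one, hf0, sub_zero, ← neg_mul]
  exact ((hasSum_mittagLeffler hα0 (-t ^ α)).mul_left _).congr_fun
    (marchaud_mittagLeffler_term hα0 hα1 ht)

theorem neg_div_le_marchaud_div_add_rpow {b : ℝ} (hα0 : 0 < α) (hα1 : α < 1) (hb : 0 < b)
    (ht : 0 < t) :
    -(Gamma (1 - α) * Gamma (α + 1)) / (b + t ^ α) ≤ marchaud α (fun s => b / (b + s ^ α)) t := by
  have hpow := continuous_rpow_const hα0.le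
  have hpow' := contDiffAt_rpow_const_of_ne (p := α) (n := 1) ht.ne'
  have hbt : 0 < b + t ^ α := by positivity
  set w : ℝ → ℝ := fun s => -(b + t ^ α)⁻¹ * s ^ α
  have hw : marchaud α w t = -(Gamma (1 - α) * Gamma (α + 1)) / (b + t ^ α) := by
    rw [marchaud_const_mul, marchaud_rpow hα1 hα0 ht, show α + 1 - α = 1 by ring, sub_self,
      rpow_zero, Gamma_one]
    ring
  rw [← hw]
  refine marchaud_mono hα0.le ht
    (integrableOn_marchaud_integrand hα1 ht (by fun_prop) (by fun_prop))
    (integrableOn_marchaud_integrand hα1 ht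
      (continuousOn_const.div (continuousOn_const.add hpow.continuousOn) fun s hs =>
        (add_pos_of_pos_of_nonneg hb (rpow_nonneg hs.1 _)).ne')
      (by fun_prop (disch := positivity) : ContDiffAt ℝ 1 (fun s => b / (b + s ^ α)) t))
    fun s hs => ?_
  have hs0 : 0 ≤ s ^ α := rpow_nonneg hs.1 _
  have hst : s ^ α ≤ t ^ α := rpow_le_rpow hs.1 hs.2.le hα0.le
  have hdiff : b / (b + t ^ α) - b / (b + s ^ α) - (w t - w s) =
      (t ^ α - s ^ α) * s ^ α / ((b + t ^ α) * (b + s ^ α)) := by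
    simp only [w]
    field_simp
    ring
  have : 0 ≤ (t ^ α - s ^ α) * s ^ α / ((b + t ^ α) * (b + s ^ α)) := by
    have := sub_nonneg.2 hst
    positivity
  linarith

theorem mul_mittagLeffler_neg_rpow_le (hα0 : 0 < α) (hα1 : α < 1) {σ : ℝ} (hσ : σ ≤ 1)
    (ht : 0 ≤ t) :
    σ * mittagLeffler α (-t ^ α) ≤ Gamma (α + 1) / (Gamma (α + 1) + t ^ α) := by
  set b := Gamma (α + 1)
  have hb : 0 < b := Gamma_pos_of_pos (by linarith)
  have hΓ : 0 < Gamma (1 - α) := Gamma_pos_of_pos (by linarith)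
  have hpow := continuous_rpow_const hα0.le
  have hE := contDiff_mittagLeffler (n := 1) hα0
  have hEc := hE.continuous
  have hv : ContinuousOn (fun s => b / (b + s ^ α)) (Icc 0 t) :=
    continuousOn_const.div (continuousOn_const.add hpow.continuousOn) fun s hs =>
      (add_pos_of_pos_of_nonneg hb (rpow_nonneg hs.1 _)).ne'
  suffices σ * mittagLeffler α (-t ^ α) - b / (b + t ^ α) ≤ 0 by linarith
  refine nonpos_of_marchaud_nonpos (f := fun s => σ * mittagLeffler α (-s ^ α) - b / (b + s ^ α))
    hα0.le ht ((by fun_prop : ContinuousOn (fun s => σ * mittagLeffler α (-s ^ α)) _).sub hv)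
    (by simp [zero_rpow hα0.ne', mittagLeffler_zero, hb.ne', hσ]) fun s hs hpos => ?_
  have hpow' := contDiffAt_rpow_const_of_ne (p := α) (n := 1) hs.1.ne'
  have hbs : b + s ^ α ≠ 0 := (add_pos hb (rpow_pos_of_pos hs.1 α)).ne'
  rw [marchaud_sub (integrableOn_marchaud_integrand hα1 hs.1 (by fun_prop) (by fun_prop))
    (integrableOn_marchaud_integrand hα1 hs.1 (hv.mono (Icc_subset_Icc_right hs.2))
      (by fun_prop (disch := assumption))), marchaud_const_mul,
    marchaud_mittagLeffler hα0 hα1 hs.1]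
  have hvs := neg_div_le_marchaud_div_add_rpow hα0 hα1 hb hs.1
  rw [neg_div, mul_div_assoc] at hvs
  nlinarith [mul_pos hΓ hpos]

theorem abs_mittagLeffler_neg_le (hα0 : 0 < α) (hα1 : α < 1) {x : ℝ} (hx : 0 ≤ x) :
    |mittagLeffler α (-x)| ≤ Gamma (α + 1) / (Gamma (α + 1) + x) := by
  have hx' : (x ^ α⁻¹) ^ α = x := rpow_inv_rpow hx hα0.ne'
  have hle := mul_mittagLeffler_neg_rpow_le hα0 hα1 le_rfl (rpow_nonneg hx α⁻¹)
  have hge := mul_mittagLeffler_neg_rpow_le hα0 hα1 (by norm_num : (-1 : ℝ) ≤ 1)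
    (rpow_nonneg hx α⁻¹)
  rw [hx'] at hle hge
  exact abs_le.2 ⟨by linarith, by linarith⟩

end MittagLeffler

theorem sq_mittagLeffler_neg_mul_le {α lam₁ lam x : ℝ} (hα0 : 0 < α) (hα1 : α < 1)
    (hlam₁ : 0 < lam₁) (hlam : lam₁ ≤ lam) (hx : 0 ≤ x) :
    mittagLeffler α (-(lam * x)) ^ 2 ≤
      (Gamma (α + 1) / min (Gamma (α + 1)) lam₁) ^ 2 * ((1 + x) ^ 2)⁻¹ := by
  set b := Gamma (α + 1)
  have hb : 0 < b := Gamma_pos_of_pos (by linarith)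
  set m := min b lam₁
  have hm : 0 < m := lt_min hb hlam₁
  have hlx : 0 ≤ lam * x := mul_nonneg (hlam₁.le.trans hlam) hx
  have hden : m * (1 + x) ≤ b + lam * x := by
    nlinarith [min_le_left b lam₁, min_le_right b lam₁]
  have habs : |mittagLeffler α (-(lam * x))| ≤ b / (m * (1 + x)) :=
    (abs_mittagLeffler_neg_le hα0 hα1 hlx).trans
      (div_le_div_of_nonneg_left hb.le (by positivity) hden)
  calc mittagLeffler α (-(lam * x)) ^ 2 = |mittagLeffler α (-(lam * x))| ^ 2 := (sq_abs _).symm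
    _ ≤ (b / (m * (1 + x))) ^ 2 := pow_le_pow_left₀ (abs_nonneg _) habs 2
    _ = (b / m) ^ 2 * ((1 + x) ^ 2)⁻¹ := by field_simp

/-- Weighted summed bound via `E_{α,1}`: there is `C > 0` (depending only on
`α, λ₁`) such that for every sequence `λ_k ≥ λ₁`, every `(a_k)` with
`∑ λ_k² a_k² < ∞` and every `t > 0`,
`∑_k λ_k² E_{α,1}(-λ_k t^α)² a_k² ≤ C (1 + t^α)^{-2} ∑_k λ_k² a_k²`. -/
theorem stmt12 (α : ℝ) (hα : α ∈ Set.Ioo (0 : ℝ) 1) (lam1 : ℝ) (hlam1 : 0 < lam1)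
    (E : ℝ → ℝ) (hE : ∀ x : ℝ, E x = ∑' k : ℕ, x ^ k * (Real.Gamma (α * k + 1))⁻¹) :
    ∃ C > 0, ∀ lam : ℕ → ℝ, (∀ k, lam1 ≤ lam k) →
      ∀ a : ℕ → ℝ, Summable (fun k => (lam k) ^ 2 * (a k) ^ 2) →
      ∀ t : ℝ, 0 < t →
        ∑' k : ℕ, (lam k) ^ 2 * (E (-(lam k * t ^ α))) ^ 2 * (a k) ^ 2 ≤
          C * ((1 + t ^ α) ^ 2)⁻¹ * ∑' k : ℕ, (lam k) ^ 2 * (a k) ^ 2 := by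
  obtain ⟨hα0, hα1⟩ := hα
  obtain rfl : E = mittagLeffler α := funext hE
  have hb : 0 < Gamma (α + 1) := Gamma_pos_of_pos (by linarith)
  refine ⟨(Gamma (α + 1) / min (Gamma (α + 1)) lam1) ^ 2, by positivity,
    fun lam hlam a ha t ht => ?_⟩
  set C := (Gamma (α + 1) / min (Gamma (α + 1)) lam1) ^ 2 * ((1 + t ^ α) ^ 2)⁻¹
  have hterm : ∀ k, lam k ^ 2 * mittagLeffler α (-(lam k * t ^ α)) ^ 2 * a k ^ 2 ≤
      C * (lam k ^ 2 * a k ^ 2) := fun k => by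
    have := sq_mittagLeffler_neg_mul_le hα0 hα1 hlam1 (hlam k) (rpow_nonneg ht.le α)
    calc lam k ^ 2 * mittagLeffler α (-(lam k * t ^ α)) ^ 2 * a k ^ 2
        = (lam k ^ 2 * a k ^ 2) * mittagLeffler α (-(lam k * t ^ α)) ^ 2 := by ring
      _ ≤ (lam k ^ 2 * a k ^ 2) * C := by gcongr
      _ = C * (lam k ^ 2 * a k ^ 2) := by ring
  calc ∑' k, lam k ^ 2 * mittagLeffler α (-(lam k * t ^ α)) ^ 2 * a k ^ 2
      ≤ ∑' k, C * (lam k ^ 2 * a k ^ 2) :=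
        (ha.mul_left C).of_nonneg_of_le (fun k => by positivity) hterm |>.tsum_le_tsum hterm
          (ha.mul_left C)
    _ = C * ∑' k, lam k ^ 2 * a k ^ 2 := tsum_mul_left
end
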